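/- arXiv:1609.06854 — 3 statements merged into one kernel-verified Lean document; each statement's English description precedes it below -/
import Mathlib

section
/- Suppose {V_{m,n}} is a family of real polynomial functions indexed by (m,n) ∈ ℕ², with V_{0,0} = 1, such that for (m,n) ≠ (0,0), V_{m,n} is a polynomial vanishing at 0 satisfying (1/2)V''_{m,n}(x) - μV'_{m,n}(x) = -mV_{m-1,n}(x) - nxV_{m,n-1}(x) (with the convention that terms with negative index are absent). Then for all (m,n) ≠ (0,0), the degree of V_{m,n} equals m + 2n. -/
/-!
The recursion says that `μ V' - ½ V''` equals `m V_{m-1,n} + n x V_{m,n-1}`. By induction, every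
`V_{m,n}` has degree `m + 2n` with positive leading coefficient: the right-hand side then has
degree `m + 2n - 1` and positive leading coefficient, as both summands do and no cancellation can
occur. Since `μ > 0`, the operator `p ↦ μ p' - ½ p''` lowers the degree of a polynomial by exactly
one and preserves the sign of its leading coefficient, so the same holds for `V_{m,n}`.
-/

open Polynomial

namespace Polynomial

/-- Degree exactly `d` with positive leading coefficient, phrased through the coefficient of `X ^ d`. -/
def PosLeading {R : Type*} [Semiring R] [PartialOrder R] (d : ℕ) (p : R[X]) : Prop :=
  p.natDegree ≤ d ∧ 0 < p.coeff d

namespace PosLeading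

section Semiring

variable {R : Type*} [Semiring R] [PartialOrder R] {d : ℕ} {p q : R[X]}

theorem natDegree_eq (hp : PosLeading d p) : p.natDegree = d :=
  natDegree_eq_of_le_of_coeff_ne_zero hp.1 hp.2.ne'

theorem X_mul (hp : PosLeading d p) : PosLeading (d + 1) (X * p) :=
  ⟨(natDegree_mul_le.trans (add_le_add natDegree_X_le hp.1)).trans_eq (add_comm _ _),
    by simpa only [coeff_X_mul] using hp.2⟩

variable [IsStrictOrderedRing R]

theorem one : PosLeading 0 (1 : R[X]) := by
  simp [PosLeading]

theorem C_mul {c : R} (hc : 0 < c) (hp : PosLeading d p) : PosLeading d (C c * p) :=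
  ⟨(natDegree_C_mul_le c p).trans hp.1, by simpa only [coeff_C_mul] using mul_pos hc hp.2⟩

theorem add (hp : PosLeading d p) (hq : PosLeading d q) : PosLeading d (p + q) :=
  ⟨(natDegree_add_le p q).trans (max_le hp.1 hq.1),
    by simpa only [coeff_add] using add_pos hp.2 hq.2⟩

end Semiring

theorem coeff_C_mul_derivative_add_C_mul_derivative_derivative {R : Type*} [CommSemiring R]
    (a b : R) (p : R[X]) (k : ℕ) :
    (C a * derivative p + C b * derivative (derivative p)).coeff k
      = a * (k + 1) * p.coeff (k + 1) + b * ((k + 1) * (k + 2)) * p.coeff (k + 2) := by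
  simp only [coeff_add, coeff_C_mul, coeff_derivative, Nat.cast_add, Nat.cast_one]
  ring

theorem of_C_mul_derivative_add_C_mul_derivative_derivative {R : Type*} [CommRing R]
    [LinearOrder R] [IsStrictOrderedRing R] {a b : R} (ha : 0 < a) {d : ℕ} {p : R[X]}
    (h : PosLeading d (C a * derivative p + C b * derivative (derivative p))) :
    PosLeading (d + 1) p := by
  have hcoeff := coeff_C_mul_derivative_add_C_mul_derivative_derivative a b p
  have hdeg : p.natDegree ≤ d + 1 := by
    by_contra! hlt
    obtain ⟨k, hk⟩ : ∃ k, p.natDegree = k + 1 := ⟨p.natDegree - 1, by omega⟩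
    have hp : p ≠ 0 := by rintro rfl; simp at hlt
    -- the coefficient of `X ^ k` is `a (k + 1)` times the leading coefficient of `p`
    have htop := hcoeff k
    rw [coeff_eq_zero_of_natDegree_lt (h.1.trans_lt (by omega)),
      coeff_eq_zero_of_natDegree_lt (p := p) (n := k + 2) (by omega), mul_zero, add_zero,
      ← hk] at htop
    exact mul_ne_zero (by positivity) (leadingCoeff_ne_zero.mpr hp) htop.symm
  refine ⟨hdeg, pos_of_mul_pos_right (a := a * (d + 1)) ?_ (by positivity)⟩
  simpa only [hcoeff, coeff_eq_zero_of_natDegree_lt (p := p) (n := d + 2) (by omega), mul_zero,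
    add_zero] using h.2

end PosLeading

end Polynomial

theorem posLeading_of_derivative_recursion {R : Type*} [CommRing R] [LinearOrder R]
    [IsStrictOrderedRing R] {a : R} (ha : 0 < a) (b : R) (V : ℕ → ℕ → R[X]) (h00 : V 0 0 = 1)
    (hrec : ∀ m n : ℕ, (m, n) ≠ (0, 0) →
      C a * derivative (V m n) + C b * derivative (derivative (V m n))
        = C (m : R) * V (m - 1) n + C (n : R) * (X * V m (n - 1))) :
    ∀ n m : ℕ, PosLeading (m + 2 * n) (V m n) := by
  intro n
  induction n with
  | zero =>
    intro m
    induction m with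
    | zero => simpa only [h00] using PosLeading.one
    | succ m ihm =>
      refine PosLeading.of_C_mul_derivative_add_C_mul_derivative_derivative ha (b := b) ?_
      rw [hrec _ _ (by simp)]
      simpa only [Nat.cast_zero, map_zero, zero_mul, mul_zero, add_zero, add_tsub_cancel_right]
        using ihm.C_mul (c := ((m + 1 : ℕ) : R)) (by positivity)
  | succ n ihn =>
    intro m
    induction m with
    | zero =>
      rw [show 0 + 2 * (n + 1) = 2 * n + 1 + 1 by ring]
      refine PosLeading.of_C_mul_derivative_add_C_mul_derivative_derivative ha (b := b) ?_
      rw [hrec _ _ (by simp)]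
      simpa only [Nat.cast_zero, map_zero, zero_mul, zero_add, add_tsub_cancel_right]
        using (ihn 0).X_mul.C_mul (c := ((n + 1 : ℕ) : R)) (by positivity)
    | succ m ihm =>
      rw [show m + 1 + 2 * (n + 1) = m + 2 * (n + 1) + 1 by ring]
      refine PosLeading.of_C_mul_derivative_add_C_mul_derivative_derivative ha (b := b) ?_
      have hX := (ihn (m + 1)).X_mul
      rw [show m + 1 + 2 * n + 1 = m + 2 * (n + 1) by ring] at hX
      rw [hrec _ _ (by simp), add_tsub_cancel_right, add_tsub_cancel_right]
      exact (ihm.C_mul (by positivity)).add (hX.C_mul (by positivity))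

theorem stmt_10 (μ : ℝ) (hμ : 0 < μ)
    (V : ℕ → ℕ → Polynomial ℝ)
    (h00 : V 0 0 = 1)
    (hODE : ∀ m n : ℕ, (m, n) ≠ (0, 0) →
      Polynomial.eval 0 (V m n) = 0 ∧
      ∀ x : ℝ, (1 / 2) * Polynomial.eval x (V m n).derivative.derivative
          - μ * Polynomial.eval x (V m n).derivative
        = -(m : ℝ) * Polynomial.eval x (V (m - 1) n)
          - (n : ℝ) * x * Polynomial.eval x (V m (n - 1))) :
    ∀ m n : ℕ, (m, n) ≠ (0, 0) → (V m n).natDegree = m + 2 * n := by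
  have hrec : ∀ m n : ℕ, (m, n) ≠ (0, 0) →
      C μ * derivative (V m n) + C (-(1 / 2)) * derivative (derivative (V m n))
        = C (m : ℝ) * V (m - 1) n + C (n : ℝ) * (X * V m (n - 1)) := fun m n hmn =>
    Polynomial.funext fun x => by
      simp only [eval_add, eval_mul, eval_C, eval_X]
      linarith [(hODE m n hmn).2 x]
  exact fun m n _ => (posLeading_of_derivative_recursion hμ _ V h00 hrec n m).natDegree_eq
end

section
/- For μ > 0 and x > 0, ∫₀^∞ e^{μx} e^{-x√(μ²+2λ)} [x/(2(μ²+2λ)) + x²/(2√(μ²+2λ))] dλ = (x/2)[1 + ∫₀^∞ e^{-sx}/(s+μ) ds]. -/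
/-!
The substitution `s = √(μ² + 2λ) - μ`, i.e. `λ = ((s + μ)² - μ²) / 2` with `dλ = (s + μ) ds`,
makes `√(μ² + 2λ) = s + μ`, and the integrand times the Jacobian becomes
`(x / 2) (e^{-sx} / (s + μ) + x e^{-sx})`. The second term integrates to `x / 2`.
-/

open MeasureTheory Real Set

section Substitution

variable {E : Type*} [NormedAddCommGroup E] [NormedSpace ℝ E] {μ : ℝ}

lemma image_Ioi_sq_add_sub_sq (hμ : 0 ≤ μ) :
    (fun s : ℝ => ((s + μ) ^ 2 - μ ^ 2) / 2) '' Ioi 0 = Ioi 0 := by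
  ext lam
  constructor
  · rintro ⟨s, hs : 0 < s, rfl⟩
    show 0 < ((s + μ) ^ 2 - μ ^ 2) / 2
    nlinarith
  · intro (hlam : 0 < lam)
    have hsq : √(μ ^ 2 + 2 * lam) ^ 2 = μ ^ 2 + 2 * lam := sq_sqrt (by positivity)
    have hlt : μ < √(μ ^ 2 + 2 * lam) := (lt_sqrt hμ).mpr (by linarith)
    refine ⟨√(μ ^ 2 + 2 * lam) - μ, sub_pos.mpr hlt, ?_⟩
    simp only [sub_add_cancel, hsq]
    ring

lemma integral_Ioi_eq_integral_Ioi_sq_add_sub_sq (hμ : 0 ≤ μ) (g : ℝ → E) :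
    ∫ lam in Ioi 0, g lam = ∫ s in Ioi 0, (s + μ) • g (((s + μ) ^ 2 - μ ^ 2) / 2) := by
  have hderiv (s : ℝ) : HasDerivAt (fun s : ℝ => ((s + μ) ^ 2 - μ ^ 2) / 2) (s + μ) s :=
    ((((hasDerivAt_id s).add_const μ).pow 2).sub_const (μ ^ 2)).div_const 2
      |>.congr_deriv (by norm_num)
  have hmono : MonotoneOn (fun s : ℝ => ((s + μ) ^ 2 - μ ^ 2) / 2) (Ioi 0) := by
    intro a (ha : 0 < a) b _ hab
    dsimp only
    gcongr
  conv_lhs => rw [← image_Ioi_sq_add_sub_sq hμ]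
  exact integral_image_eq_integral_deriv_smul_of_monotoneOn measurableSet_Ioi
    (fun s _ => (hderiv s).hasDerivWithinAt) hmono g

end Substitution

/-- `E[A(x) e^{-λ τ(x)}]`, where `τ(x)` is the first-passage time of level `x` by Brownian motion
with drift `μ` and `A(x)` its area up to `τ(x)`. -/
noncomputable def areaLaplace (μ x lam : ℝ) : ℝ :=
  exp (μ * x) * exp (-x * √(μ ^ 2 + 2 * lam)) *
    (x / (2 * (μ ^ 2 + 2 * lam)) + x ^ 2 / (2 * √(μ ^ 2 + 2 * lam)))

lemma mul_areaLaplace_sq_add_sub_sq {μ x s : ℝ} (hs : 0 < s + μ) :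
    (s + μ) * areaLaplace μ x (((s + μ) ^ 2 - μ ^ 2) / 2)
      = x / 2 * (exp (-s * x) / (s + μ)) + x / 2 * (x * exp (-s * x)) := by
  have hsq : μ ^ 2 + 2 * (((s + μ) ^ 2 - μ ^ 2) / 2) = (s + μ) ^ 2 := by ring
  have hexp : exp (μ * x) * exp (-x * (s + μ)) = exp (-s * x) := by
    rw [← exp_add]; ring_nf
  rw [areaLaplace, hsq, sqrt_sq hs.le, hexp]
  field_simp

lemma integrableOn_exp_neg_mul_div_add_Ioi {μ x : ℝ} (hμ : 0 < μ) (hx : 0 < x) :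
    IntegrableOn (fun s => exp (-s * x) / (s + μ)) (Ioi 0) := by
  refine ((exp_neg_integrableOn_Ioi 0 hx).div_const μ).mono' ?_ ?_
  · refine ContinuousOn.aestronglyMeasurable ?_ measurableSet_Ioi
    exact ContinuousOn.div (by fun_prop) (by fun_prop) fun s (hs : 0 < s) => by positivity
  · filter_upwards [ae_restrict_mem measurableSet_Ioi] with s (hs : 0 < s)
    rw [norm_of_nonneg (by positivity), show -x * s = -s * x by ring]
    gcongr
    linarith

lemma integral_mul_exp_neg_mul_Ioi {x : ℝ} (hx : 0 < x) :
    ∫ s in Ioi 0, x * exp (-s * x) = 1 := by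
  have h : ∫ s in Ioi 0, exp (-s * x) = x⁻¹ := by
    simpa [mul_comm] using integral_exp_mul_Ioi (neg_neg_of_pos hx) 0
  rw [integral_const_mul, h, mul_inv_cancel₀ hx.ne']

theorem stmt_14 (μ x : ℝ) (hμ : 0 < μ) (hx : 0 < x) :
    ∫ lam in Set.Ioi (0 : ℝ),
      Real.exp (μ * x) * Real.exp (-x * Real.sqrt (μ ^ 2 + 2 * lam)) *
        (x / (2 * (μ ^ 2 + 2 * lam)) + x ^ 2 / (2 * Real.sqrt (μ ^ 2 + 2 * lam)))
      = (x / 2) * (1 + ∫ s in Set.Ioi (0 : ℝ), Real.exp (-s * x) / (s + μ)) := by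
  change ∫ lam in Ioi 0, areaLaplace μ x lam = _
  have hexp : IntegrableOn (fun s => x * exp (-s * x)) (Ioi 0) := by
    have h := (exp_neg_integrableOn_Ioi 0 hx).const_mul x
    simp_rw [neg_mul, mul_comm _ x] at h ⊢
    exact h
  rw [integral_Ioi_eq_integral_Ioi_sq_add_sub_sq hμ.le]
  simp_rw [smul_eq_mul]
  rw [setIntegral_congr_fun measurableSet_Ioi
      fun s (hs : 0 < s) => mul_areaLaplace_sq_add_sub_sq (μ := μ) (x := x) (by linarith),
    integral_add ((integrableOn_exp_neg_mul_div_add_Ioi hμ hx).const_mul _) (hexp.const_mul _),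
    integral_const_mul, integral_const_mul, integral_mul_exp_neg_mul_Ioi hx]
  ring
end

section
/- For c > 0, ∫₀^∞ (2^{1/3}/(3^{2/3}Γ(1/3))) · (x/a^{4/3}) · e^{-2x³/(9a)} da = 1 for every x > 0, i.e., the function a ↦ (2^{1/3}/(3^{2/3}Γ(1/3))) x a^{-4/3} e^{-2x³/(9a)} is a probability density on (0,∞); moreover ∫₀^∞ a · f(a) da = +∞. -/
/-!
Substituting `a = 1 / t` turns `a ^ (-(s + 1)) * exp (-(k / a))` into the Gamma kernel
`t ^ (s - 1) * exp (-(k * t))`, whose integral is `Γ(s) / k ^ s`; with `s = 1 / 3` and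
`k = 2 x³ / 9` this is exactly the reciprocal of the normalising constant. For the first moment,
`a f(a)` behaves like a constant times `a ^ (-1/3)` at infinity, which is not integrable.
-/

open MeasureTheory Real Set

theorem lintegral_ofReal_rpow_Ioi_eq_top {s t : ℝ} (ht : 0 < t) (hs : -1 ≤ s) :
    ∫⁻ a in Ioi t, ENNReal.ofReal (a ^ s) = ⊤ := by
  by_contra hfin
  have hnonneg : 0 ≤ᵐ[volume.restrict (Ioi t)] fun a : ℝ => a ^ s :=
    (ae_restrict_mem measurableSet_Ioi).mono fun a ha => rpow_nonneg (ht.trans ha).le s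
  have hint : IntegrableOn (fun a : ℝ => a ^ s) (Ioi t) :=
    ⟨(measurable_id.pow_const s).aestronglyMeasurable,
      (hasFiniteIntegral_iff_ofReal hnonneg).2 (lt_top_iff_ne_top.2 hfin)⟩
  exact absurd ((integrableOn_Ioi_rpow_iff ht).1 hint) (not_lt.2 hs)

theorem integral_rpow_neg_mul_exp_neg_div_Ioi {s k : ℝ} (hs : 0 < s) (hk : 0 < k) :
    ∫ a in Ioi 0, a ^ (-(s + 1)) * exp (-(k / a)) = (1 / k) ^ s * Gamma s := by
  rw [← integral_rpow_mul_exp_neg_mul_Ioi hs hk,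
    ← integral_comp_rpow_Ioi _ (p := -1) (by norm_num)]
  refine setIntegral_congr_fun measurableSet_Ioi fun t (ht : 0 < t) => ?_
  have hinv : (t ^ (-1 : ℝ)) ^ (-(s + 1)) = t ^ (s + 1) := by
    rw [← rpow_mul ht.le]; ring_nf
  have hpow : t ^ ((-1 : ℝ) - 1) * t ^ (s + 1) = t ^ (s - 1) := by
    rw [← rpow_add ht]; ring_nf
  rw [smul_eq_mul, hinv, rpow_neg_one, div_inv_eq_mul, abs_neg, abs_one, one_mul, ← hpow]
  ring

theorem lintegral_rpow_neg_mul_exp_neg_div_Ioi_eq_top {s : ℝ} (k : ℝ) (hs : s ≤ 1) :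
    ∫⁻ a in Ioi 0, ENNReal.ofReal (a ^ (-s) * exp (-(k / a))) = ⊤ := by
  set M := max 1 k
  have hM : 0 < M := one_pos.trans_le (le_max_left _ _)
  -- beyond `M` the exponential factor is at least `exp (-1)`, leaving a non-integrable power
  have hbound : ∀ a ∈ Ioi M,
      ENNReal.ofReal (a ^ (-s)) * ENNReal.ofReal (exp (-1)) ≤
        ENNReal.ofReal (a ^ (-s) * exp (-(k / a))) := fun a (ha : M < a) => by
    have ha0 : 0 < a := hM.trans ha
    have hka : k / a ≤ 1 := (div_le_one ha0).2 ((le_max_right 1 k).trans ha.le)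
    rw [← ENNReal.ofReal_mul (rpow_nonneg ha0.le _)]
    gcongr
  refine top_le_iff.1 ?_
  calc ⊤ = (∫⁻ a in Ioi M, ENNReal.ofReal (a ^ (-s))) * ENNReal.ofReal (exp (-1)) := by
        rw [lintegral_ofReal_rpow_Ioi_eq_top hM (by linarith),
          ENNReal.top_mul (ENNReal.ofReal_pos.2 (exp_pos _)).ne']
    _ = ∫⁻ a in Ioi M, ENNReal.ofReal (a ^ (-s)) * ENNReal.ofReal (exp (-1)) :=
        (lintegral_mul_const _ (measurable_id.pow_const _).ennreal_ofReal).symm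
    _ ≤ ∫⁻ a in Ioi M, ENNReal.ofReal (a ^ (-s) * exp (-(k / a))) :=
        setLIntegral_mono' measurableSet_Ioi hbound
    _ ≤ ∫⁻ a in Ioi 0, ENNReal.ofReal (a ^ (-s) * exp (-(k / a))) :=
        lintegral_mono_set (Ioi_subset_Ioi hM.le)

theorem one_div_two_mul_cube_div_nine_rpow_one_third {x : ℝ} (hx : 0 < x) :
    (1 / (2 * x ^ 3 / 9)) ^ ((1 : ℝ) / 3) = 3 ^ ((2 : ℝ) / 3) / (2 ^ ((1 : ℝ) / 3) * x) := by
  have h9 : (9 : ℝ) = 3 ^ (2 : ℝ) := by norm_num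
  rw [one_div_div, h9, div_rpow (by positivity) (by positivity),
    mul_rpow (by norm_num) (by positivity), ← rpow_mul (by norm_num), ← rpow_natCast x 3,
    ← rpow_mul hx.le]
  norm_num

theorem stmt_18 (x : ℝ) (hx : 0 < x)
    (f : ℝ → ℝ)
    (hf : f = fun a => (2 ^ ((1 : ℝ) / 3) / (3 ^ ((2 : ℝ) / 3) * Real.Gamma (1 / 3))) *
      (x / a ^ ((4 : ℝ) / 3)) * Real.exp (-2 * x ^ 3 / (9 * a))) :
    (∫ a in Set.Ioi (0 : ℝ), f a) = 1 ∧
    (∫⁻ a in Set.Ioi (0 : ℝ), ENNReal.ofReal (a * f a)) = ⊤ := by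
  set C := 2 ^ ((1 : ℝ) / 3) / (3 ^ ((2 : ℝ) / 3) * Gamma (1 / 3)) with hC
  set k := 2 * x ^ 3 / 9 with hk
  have hf_eq : EqOn f (fun a => C * x * (a ^ (-((1 : ℝ) / 3 + 1)) * exp (-(k / a)))) (Ioi 0) :=
    fun a (ha : 0 < a) => by
      subst hf
      beta_reduce
      rw [show -((1 : ℝ) / 3 + 1) = -(4 / 3) by norm_num, rpow_neg ha.le,
        show -2 * x ^ 3 / (9 * a) = -(k / a) by rw [hk]; ring]
      ring
  have hmoment : EqOn (fun a => ENNReal.ofReal (a * f a))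
      (fun a => ENNReal.ofReal (C * x) * ENNReal.ofReal (a ^ (-((1 : ℝ) / 3)) * exp (-(k / a))))
      (Ioi 0) := fun a (ha : 0 < a) => by
    beta_reduce
    rw [← ENNReal.ofReal_mul (by positivity), hf_eq ha]
    beta_reduce
    rw [show -((1 : ℝ) / 3 + 1) = -(1 / 3) - 1 by ring, rpow_sub_one ha.ne']
    field_simp
  constructor
  · rw [setIntegral_congr_fun measurableSet_Ioi hf_eq, integral_const_mul,
      integral_rpow_neg_mul_exp_neg_div_Ioi (by norm_num) (by positivity),
      one_div_two_mul_cube_div_nine_rpow_one_third hx, hC]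
    field_simp
  · rw [setLIntegral_congr_fun measurableSet_Ioi hmoment, lintegral_const_mul _ (by fun_prop),
      lintegral_rpow_neg_mul_exp_neg_div_Ioi_eq_top k (by norm_num),
      ENNReal.mul_top (ENNReal.ofReal_pos.2 (by positivity)).ne']
end
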